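/- For every δ with 0 < δ < 1/4 and every δ-pseudo orbit (x_k)_{k∈ℕ} of T, there exists y ∈ [0,∞) such that |T^k(y) − x_k| ≤ 21δ for all k ∈ ℕ. -/

import Mathlib

open Set Filter

noncomputable section

/-- `ell n = min {k ∈ ℤ⁺ : n ≤ 4^k}`. -/
def ell (n : ℕ) : ℕ := sInf {k : ℕ | 1 ≤ k ∧ n ≤ 4 ^ k}

/-- The value of the map `T` at the nonnegative integer `n`:
`0` if `n` is even and `4 ^ ℓ(n) + 1` if `n` is odd. -/
def Tval (n : ℕ) : ℝ := if Even n then 0 else 4 ^ ell n + 1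

/-- `T : [0,∞) → [0,∞)` is the unique continuous map which is affine on each
integer interval `[n-1, n]` and takes the value `Tval n` at every nonnegative
integer `n`.  This is expressed by linear interpolation on each `[n, n+1]`. -/
def IsT (T : ℝ → ℝ) : Prop :=
  ∀ n : ℕ, ∀ x ∈ Set.Icc (n : ℝ) (n + 1),
    T x = ((n : ℝ) + 1 - x) * Tval n + (x - (n : ℝ)) * Tval (n + 1)

/-- `(x_k)` is a `δ`-pseudo orbit of `T` in `[0,∞)`. -/
def IsPseudoOrbit (T : ℝ → ℝ) (δ : ℝ) (x : ℕ → ℝ) : Prop :=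
  (∀ k, 0 ≤ x k) ∧ ∀ k, |x (k + 1) - T (x k)| < δ

/-!
`T` is affine on each `[n, n + 1]` with slope of absolute value at least `5`, so the image of
the `2δ`-neighbourhood of a point `x` covers the `3δ`-neighbourhood of `T x`, with one exception:
near an odd integer `p` the map folds, and the image only reaches up to the peak value
`T p = 4 ^ ℓ(p) + 1`, which is again an odd integer. Hence one can choose inductively
intervals `I k`, each either `[x k - 2δ, x k + 2δ] ∩ [0, ∞)` or `[m - 3δ, m]` for an odd `m`
within `2δ` of `x k`, with `I (k + 1) ⊆ T '' I k`. By compactness some `y` has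
`T^[k] y ∈ I k` for all `k`, and then `|T^[k] y - x k| ≤ 5δ`.
-/

theorem exists_seq_of_forall_exists_succ {α : Type*} {P : ℕ → α → Prop}
    {R : ℕ → α → α → Prop} {a : α} (h₀ : P 0 a)
    (h : ∀ k a, P k a → ∃ b, P (k + 1) b ∧ R k a b) :
    ∃ f : ℕ → α, (∀ k, P k (f k)) ∧ ∀ k, R k (f k) (f (k + 1)) := by
  choose g hg using h
  let F : ∀ k, {a // P k a} := fun k =>
    Nat.rec ⟨a, h₀⟩ (fun k b => ⟨g k b.1 b.2, (hg k b.1 b.2).1⟩) k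
  exact ⟨fun k => (F k).1, fun k => (F k).2, fun k => (hg k (F k).1 (F k).2).2⟩

theorem exists_iterate_mem_of_subset_image {X : Type*} [TopologicalSpace X] [T2Space X]
    {f : X → X} {s : Set X} (hf : ContinuousOn f s) (hfs : MapsTo f s s) {K : ℕ → Set X}
    (hKs : K 0 ⊆ s) (hK : ∀ k, IsCompact (K k)) (hne : ∀ k, (K k).Nonempty)
    (hcover : ∀ k, K (k + 1) ⊆ f '' K k) :
    ∃ y ∈ K 0, ∀ k, f^[k] y ∈ K k := by
  let A : ℕ → Set X := fun k => ⋂ j ≤ k, K 0 ∩ f^[j] ⁻¹' K j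
  have mem_A {y k} : y ∈ A k ↔ ∀ j ≤ k, y ∈ K 0 ∧ f^[j] y ∈ K j := by
    simp only [A, mem_iInter₂, mem_inter_iff, mem_preimage]
  have hA_closed (k) : IsClosed (A k) := isClosed_biInter fun j _ =>
    ((hf.iterate hfs j).mono hKs).preimage_isClosed_of_isClosed (hK 0).isClosed (hK j).isClosed
  have hA_anti (k) : A (k + 1) ⊆ A k := fun y hy =>
    mem_A.2 fun j hj => mem_A.1 hy j (hj.trans k.le_succ)
  have lift (k) :
      ∀ z ∈ K k, ∃ y, (∀ j ≤ k, y ∈ K 0 ∧ f^[j] y ∈ K j) ∧ f^[k] y = z := by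
    induction k with
    | zero => exact fun z hz => ⟨z, fun j hj => by simp_all, rfl⟩
    | succ k ih =>
      intro z hz
      obtain ⟨u, hu, rfl⟩ := hcover k hz
      obtain ⟨y, hy, rfl⟩ := ih u hu
      refine ⟨y, fun j hj => ?_, Function.iterate_succ_apply' f k y⟩
      rcases hj.lt_or_eq with hj | rfl
      · exact hy j (Nat.lt_succ_iff.1 hj)
      · rw [Function.iterate_succ_apply']; exact ⟨(hy 0 k.zero_le).1, hz⟩
  have hA_ne (k) : (A k).Nonempty := by
    obtain ⟨z, hz⟩ := hne k
    obtain ⟨y, hy, -⟩ := lift k z hz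
    exact ⟨y, mem_A.2 hy⟩
  have hA₀ : IsCompact (A 0) :=
    (hK 0).of_isClosed_subset (hA_closed 0) fun y hy => (mem_A.1 hy 0 le_rfl).1
  obtain ⟨y, hy⟩ := IsCompact.nonempty_iInter_of_sequence_nonempty_isCompact_isClosed
    A hA_anti hA_ne hA₀ hA_closed
  rw [mem_iInter] at hy
  exact ⟨y, (mem_A.1 (hy 0) 0 le_rfl).1, fun k => (mem_A.1 (hy k) k le_rfl).2⟩

theorem one_le_ell (n : ℕ) : 1 ≤ ell n := by
  have hne : {k : ℕ | 1 ≤ k ∧ n ≤ 4 ^ k}.Nonempty :=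
    ⟨n + 1, Nat.le_add_left 1 n, (Nat.lt_pow_self (by norm_num)).le.trans
      (Nat.pow_le_pow_right (by norm_num) n.le_succ)⟩
  exact (Nat.sInf_mem hne).1

theorem Tval_of_even {n : ℕ} (h : Even n) : Tval n = 0 := if_pos h

theorem exists_odd_Tval_eq {n : ℕ} (h : Odd n) :
    ∃ m : ℕ, Odd m ∧ 5 ≤ m ∧ Tval n = m := by
  have h₁ := one_le_ell n
  refine ⟨4 ^ ell n + 1, (Nat.even_pow.2 ⟨by decide, by omega⟩).add_one, ?_, ?_⟩
  · have := Nat.pow_le_pow_right (show 0 < 4 by norm_num) h₁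
    omega
  · simp [Tval, Nat.not_even_iff_odd.2 h]

theorem five_le_Tval_of_odd {n : ℕ} (h : Odd n) : 5 ≤ Tval n := by
  obtain ⟨m, -, hm, he⟩ := exists_odd_Tval_eq h
  rw [he]; exact_mod_cast hm

theorem five_le_Tval_succ_sub_of_even {n : ℕ} (h : Even n) : 5 ≤ Tval (n + 1) - Tval n := by
  rw [Tval_of_even h, sub_zero]; exact five_le_Tval_of_odd h.add_one

theorem Tval_succ_sub_le_of_odd {n : ℕ} (h : Odd n) : Tval (n + 1) - Tval n ≤ -5 := by
  rw [Tval_of_even h.add_one]; linarith [five_le_Tval_of_odd h]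

theorem Tval_nonneg (n : ℕ) : 0 ≤ Tval n := by
  rcases Nat.even_or_odd n with h | h
  · rw [Tval_of_even h]
  · linarith [five_le_Tval_of_odd h]

theorem iUnion_Icc_natCast_eq_Ici : ⋃ n : ℕ, Icc (n : ℝ) (n + 1) = Ici 0 := by
  refine Subset.antisymm (iUnion_subset fun n y hy => (Nat.cast_nonneg n).trans hy.1) fun y hy =>
    mem_iUnion.2 ⟨⌊y⌋₊, Nat.floor_le hy, (Nat.lt_floor_add_one y).le⟩

theorem locallyFinite_Icc_natCast : LocallyFinite fun n : ℕ => Icc (n : ℝ) (n + 1) := by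
  have hℤ : LocallyFinite fun n : ℤ => Icc (n : ℝ) (n + 1) :=
    locallyFinite_Icc_of_tendsto tendsto_intCast_atTop_atTop
      (tendsto_atBot_add_const_right _ 1 (tendsto_intCast_atBot_iff.2 tendsto_id))
  simpa [Function.comp_def] using hℤ.comp_injective Nat.cast_injective

namespace IsT

variable {T : ℝ → ℝ}

theorem apply_natCast (hT : IsT T) (n : ℕ) : T n = Tval n := by
  rw [hT n n ⟨le_rfl, by linarith⟩]; ring

theorem sub_eq (hT : IsT T) {n : ℕ} {y y' : ℝ} (hy : y ∈ Icc (n : ℝ) (n + 1))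
    (hy' : y' ∈ Icc (n : ℝ) (n + 1)) :
    T y - T y' = (y - y') * (Tval (n + 1) - Tval n) := by
  rw [hT n y hy, hT n y' hy']; ring

theorem apply_eq_of_odd (hT : IsT T) {p : ℕ} (hp : Odd p) {y : ℝ} (hy : |y - p| ≤ 1) :
    T y = Tval p * (1 - |y - p|) := by
  obtain ⟨n, rfl⟩ : ∃ n, p = n + 1 := ⟨p - 1, by have := hp.pos; omega⟩
  have hn : Even n := by simpa [Nat.odd_add_one] using hp
  push_cast at hy ⊢
  obtain ⟨hy₁, hy₂⟩ := abs_le.1 hy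
  rcases le_total y (n + 1) with h | h
  · rw [abs_of_nonpos (by linarith), hT n y ⟨by linarith, h⟩, Tval_of_even hn]
    ring
  · rw [abs_of_nonneg (by linarith), hT (n + 1) y ⟨mod_cast h, by push_cast; linarith⟩,
      Tval_of_even hn.add_one.add_one]
    push_cast; ring

theorem nonneg (hT : IsT T) {y : ℝ} (hy : 0 ≤ y) : 0 ≤ T y := by
  obtain ⟨n, hn⟩ := mem_iUnion.1 (iUnion_Icc_natCast_eq_Ici.ge hy)
  rw [hT n y hn]
  have := Tval_nonneg n
  have := Tval_nonneg (n + 1)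
  nlinarith [hn.1, hn.2]

theorem mapsTo (hT : IsT T) : MapsTo T (Ici 0) (Ici 0) := fun _ hy => hT.nonneg hy

theorem continuousOn (hT : IsT T) : ContinuousOn T (Ici 0) := by
  rw [← iUnion_Icc_natCast_eq_Ici]
  refine locallyFinite_Icc_natCast.continuousOn_iUnion (fun _ => isClosed_Icc) fun n => ?_
  exact (by fun_prop : Continuous fun y : ℝ => (n + 1 - y) * Tval n + (y - n) * Tval (n + 1))
    |>.continuousOn.congr (hT n)

theorem Icc_subset_image (hT : IsT T) {a b u v : ℝ} (ha : 0 ≤ a) (hu : u ∈ Icc a b)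
    (hv : v ∈ Icc a b) : Icc (T u) (T v) ⊆ T '' Icc a b :=
  isPreconnected_Icc.intermediate_value hu hv <| hT.continuousOn.mono fun _ hy => ha.trans hy.1

end IsT

def shadowBall (δ x : ℝ) : Set ℝ := Icc (max (x - 2 * δ) 0) (x + 2 * δ)

def IsShadowInterval (δ x : ℝ) (I : Set ℝ) : Prop :=
  I = shadowBall δ x ∨ ∃ m : ℕ, Odd m ∧ |x - m| < 2 * δ ∧ I = Icc ((m : ℝ) - 3 * δ) m

namespace IsShadowInterval

variable {δ x : ℝ} {I : Set ℝ}

theorem isCompact (h : IsShadowInterval δ x I) : IsCompact I := by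
  rcases h with rfl | ⟨m, -, -, rfl⟩ <;> exact isCompact_Icc

theorem nonempty (h : IsShadowInterval δ x I) (hδ : 0 ≤ δ) (hx : 0 ≤ x) : I.Nonempty := by
  rcases h with rfl | ⟨m, -, -, rfl⟩
  · exact nonempty_Icc.2 (max_le (by linarith) (by linarith))
  · exact nonempty_Icc.2 (by linarith)

theorem subset_Ici (h : IsShadowInterval δ x I) (hδ : δ < 1 / 4) : I ⊆ Ici 0 := by
  rcases h with rfl | ⟨m, hm, -, rfl⟩
  · exact fun z hz => (le_max_right _ _).trans hz.1
  · have : (1 : ℝ) ≤ m := mod_cast hm.pos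
    exact fun z hz => show 0 ≤ z by linarith [hz.1]

theorem abs_sub_le {z : ℝ} (h : IsShadowInterval δ x I) (hz : z ∈ I) : |z - x| ≤ 5 * δ := by
  rcases h with rfl | ⟨m, -, hxm, rfl⟩
  · have := (le_max_left _ _).trans hz.1
    rw [abs_le]; constructor <;> linarith [hz.2]
  · rw [abs_lt] at hxm
    rw [abs_le]; constructor <;> linarith [hz.1, hz.2]

end IsShadowInterval

theorem exists_shadow_subset_Icc_of_le {δ y x' c d : ℝ} (hx' : |x' - y| < δ)
    (hc : c ≤ max (y - 3 * δ) 0) (hd : y + 3 * δ ≤ d) :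
    ∃ I, IsShadowInterval δ x' I ∧ I ⊆ Icc c d := by
  rw [abs_lt] at hx'
  exact ⟨_, Or.inl rfl,
    Icc_subset_Icc (hc.trans (max_le_max (by linarith) le_rfl)) (by linarith)⟩

theorem exists_shadow_subset_Icc_of_le_odd {δ y x' c : ℝ} {m : ℕ} (hm : Odd m)
    (hx' : |x' - y| < δ) (hc : c ≤ y - 3 * δ) (hy : y ≤ m) :
    ∃ I, IsShadowInterval δ x' I ∧ I ⊆ Icc c m := by
  rw [abs_lt] at hx'
  by_cases hx'm : x' + 2 * δ ≤ m
  · exact ⟨_, Or.inl rfl, Icc_subset_Icc (le_max_of_le_left (by linarith)) hx'm⟩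
  · refine ⟨_, Or.inr ⟨m, hm, abs_lt.2 ⟨by linarith, by linarith⟩, rfl⟩, ?_⟩
    exact Icc_subset_Icc (by linarith) le_rfl

namespace IsT

variable {T : ℝ → ℝ} {δ x x' a b : ℝ}

theorem exists_shadow_of_spread (hT : IsT T) (ha : 0 ≤ a) {u v : ℝ} (hu : u ∈ Icc a b)
    (hv : v ∈ Icc a b) (hTu : T u ≤ max (T x - 3 * δ) 0) (hTv : T x + 3 * δ ≤ T v)
    (hx' : |x' - T x| < δ) : ∃ I, IsShadowInterval δ x' I ∧ I ⊆ T '' Icc a b :=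
  (exists_shadow_subset_Icc_of_le hx' hTu hTv).imp fun _ hI =>
    ⟨hI.1, hI.2.trans (hT.Icc_subset_image ha hu hv)⟩

theorem exists_shadow_of_fold (hT : IsT T) (ha : 0 ≤ a) {u : ℝ} {p : ℕ} (hp : Odd p)
    (hpI : (p : ℝ) ∈ Icc a b) (huI : u ∈ Icc a b) (hxp : |x - p| ≤ 1) (hup : |u - p| ≤ 1)
    (hux : |x - p| + δ ≤ |u - p|) (hx' : |x' - T x| < δ) :
    ∃ I, IsShadowInterval δ x' I ∧ I ⊆ T '' Icc a b := by
  obtain ⟨m, hm, hm5, hpm⟩ := exists_odd_Tval_eq hp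
  have hδ : 0 < δ := (abs_nonneg _).trans_lt hx'
  have hTu := hT.apply_eq_of_odd hp hup
  have hTx := hT.apply_eq_of_odd hp hxp
  have hTp : T p = m := (hT.apply_natCast p).trans hpm
  rw [hpm] at hTu hTx
  have hm5' : (5 : ℝ) ≤ m := mod_cast hm5
  obtain ⟨I, hI, hIsub⟩ := exists_shadow_subset_Icc_of_le_odd (c := T u) hm hx'
    (by rw [hTu, hTx]; nlinarith) (by rw [hTx]; nlinarith [abs_nonneg (x - p)])
  exact ⟨I, hI, hIsub.trans (hTp ▸ hT.Icc_subset_image ha huI hpI)⟩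

theorem exists_shadow_ball_of_far (hT : IsT T) (hx : 0 ≤ x)
    (hfar : ∀ p : ℕ, 2 * δ ≤ |x - p|) (hx' : |x' - T x| < δ) :
    ∃ I, IsShadowInterval δ x' I ∧ I ⊆ T '' shadowBall δ x := by
  set n := ⌊x⌋₊
  have hδ : 0 < δ := (abs_nonneg _).trans_lt hx'
  have hlo : (n : ℝ) ≤ x - 2 * δ := by
    have := hfar n
    rw [abs_of_nonneg (by linarith [Nat.floor_le hx])] at this
    linarith
  have hhi : x + 2 * δ ≤ n + 1 := by
    have := hfar (n + 1)
    rw [abs_of_neg (by push_cast; linarith [Nat.lt_floor_add_one x])] at this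
    push_cast at this
    linarith
  have hball : shadowBall δ x = Icc (x - 2 * δ) (x + 2 * δ) := by
    rw [shadowBall, max_eq_left (by linarith [n.cast_nonneg (α := ℝ)])]
  have hmem {y : ℝ} (hy : y ∈ Icc (x - 2 * δ) (x + 2 * δ)) : y ∈ Icc (n : ℝ) (n + 1) :=
    ⟨hlo.trans hy.1, hy.2.trans hhi⟩
  have hl : x - 2 * δ ∈ Icc (x - 2 * δ) (x + 2 * δ) := ⟨le_rfl, by linarith⟩
  have hc : x ∈ Icc (x - 2 * δ) (x + 2 * δ) := ⟨by linarith, by linarith⟩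
  have hr : x + 2 * δ ∈ Icc (x - 2 * δ) (x + 2 * δ) := ⟨by linarith, le_rfl⟩
  have hTl := hT.sub_eq (hmem hl) (hmem hc)
  have hTr := hT.sub_eq (hmem hr) (hmem hc)
  rw [hball]
  rcases Nat.even_or_odd n with hn | hn
  · have := five_le_Tval_succ_sub_of_even hn
    exact hT.exists_shadow_of_spread (by linarith) hl hr
      (le_max_of_le_left (by nlinarith)) (by nlinarith) hx'
  · have := Tval_succ_sub_le_of_odd hn
    exact hT.exists_shadow_of_spread (by linarith) hr hl
      (le_max_of_le_left (by nlinarith)) (by nlinarith) hx'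

theorem exists_shadow_ball_of_near_even (hT : IsT T) (hδ : δ < 1 / 4) (hx : 0 ≤ x) {p : ℕ}
    (hp : Even p) (hxp : |x - p| < 2 * δ) (hx' : |x' - T x| < δ) :
    ∃ I, IsShadowInterval δ x' I ∧ I ⊆ T '' shadowBall δ x := by
  have hTp : T p = 0 := (hT.apply_natCast p).trans (Tval_of_even hp)
  rw [abs_lt] at hxp
  rcases le_or_gt (p : ℝ) x with hpx | hxp'
  · have hr : x + 2 * δ ∈ Icc (p : ℝ) (p + 1) := ⟨by linarith, by linarith⟩
    have hTr := hT.sub_eq hr ⟨hpx, by linarith⟩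
    have := five_le_Tval_succ_sub_of_even hp
    exact hT.exists_shadow_of_spread (le_max_right _ _) (u := p)
      ⟨max_le (by linarith) p.cast_nonneg, by linarith⟩
      ⟨max_le (by linarith) (by linarith), le_rfl⟩
      (by rw [hTp]; exact le_max_right _ _) (by nlinarith) hx'
  · obtain ⟨n, rfl⟩ : ∃ n, p = n + 1 :=
      ⟨p - 1, by have : 0 < p := mod_cast hx.trans_lt hxp'; omega⟩
    have hn : Odd n := by simpa [Nat.even_add_one] using hp
    have hn1 : (1 : ℝ) ≤ n := mod_cast hn.pos
    push_cast at hxp hxp' hTp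
    have hl : x - 2 * δ ∈ Icc (n : ℝ) (n + 1) := ⟨by linarith, by linarith⟩
    have hTl := hT.sub_eq hl ⟨by linarith, hxp'.le⟩
    have := Tval_succ_sub_le_of_odd hn
    have hball : shadowBall δ x = Icc (x - 2 * δ) (x + 2 * δ) := by
      rw [shadowBall, max_eq_left (by linarith)]
    rw [hball]
    exact hT.exists_shadow_of_spread (by linarith) (u := n + 1)
      ⟨by linarith, by linarith⟩ ⟨le_rfl, by linarith⟩ (by rw [hTp]; exact le_max_right _ _)
      (by nlinarith) hx'

theorem exists_shadow_ball_of_near_odd (hT : IsT T) (hδ : δ < 1 / 4) {p : ℕ}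
    (hp : Odd p) (hxp : |x - p| < 2 * δ) (hx' : |x' - T x| < δ) :
    ∃ I, IsShadowInterval δ x' I ∧ I ⊆ T '' shadowBall δ x := by
  have hp1 : (1 : ℝ) ≤ p := mod_cast hp.pos
  have hxp' := abs_lt.1 hxp
  have hball : shadowBall δ x = Icc (x - 2 * δ) (x + 2 * δ) := by
    rw [shadowBall, max_eq_left (by linarith)]
  have hpI : (p : ℝ) ∈ Icc (x - 2 * δ) (x + 2 * δ) := ⟨by linarith, by linarith⟩
  rw [hball]
  rcases le_or_gt (p : ℝ) x with hpx | hxp''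
  · have hup : |x + 2 * δ - p| = |x - p| + 2 * δ := by
      rw [abs_of_nonneg (by linarith), abs_of_nonneg (by linarith)]; ring
    exact hT.exists_shadow_of_fold (by linarith) hp hpI ⟨by linarith, le_rfl⟩ (by linarith)
      (by linarith) (by linarith) hx'
  · have hup : |x - 2 * δ - p| = |x - p| + 2 * δ := by
      rw [abs_of_neg (by linarith), abs_of_neg (by linarith)]; ring
    exact hT.exists_shadow_of_fold (by linarith) hp hpI ⟨le_rfl, by linarith⟩ (by linarith)
      (by linarith) (by linarith) hx'

theorem exists_shadow_Icc_of_odd (hT : IsT T) (hδ : δ < 1 / 4) {m : ℕ} (hm : Odd m)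
    (hxm : |x - m| < 2 * δ) (hx' : |x' - T x| < δ) :
    ∃ I, IsShadowInterval δ x' I ∧ I ⊆ T '' Icc ((m : ℝ) - 3 * δ) m := by
  have hm1 : (1 : ℝ) ≤ m := mod_cast hm.pos
  have hδ₀ : 0 < δ := (abs_nonneg _).trans_lt hx'
  have hum : |(m : ℝ) - 3 * δ - m| = 3 * δ := by
    rw [sub_sub_cancel_left, abs_neg, abs_of_pos (by linarith)]
  exact hT.exists_shadow_of_fold (by linarith) hm ⟨by linarith, le_rfl⟩
    ⟨le_rfl, by linarith⟩ (by linarith) (by linarith) (by linarith) hx'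

end IsT

theorem IsShadowInterval.exists_subset_image {T : ℝ → ℝ} {δ x x' : ℝ} {I : Set ℝ}
    (h : IsShadowInterval δ x I) (hT : IsT T) (hδ : δ < 1 / 4) (hx : 0 ≤ x)
    (hx' : |x' - T x| < δ) : ∃ I', IsShadowInterval δ x' I' ∧ I' ⊆ T '' I := by
  rcases h with rfl | ⟨m, hm, hxm, rfl⟩
  · by_cases hnear : ∃ p : ℕ, |x - p| < 2 * δ
    · obtain ⟨p, hxp⟩ := hnear
      rcases p.even_or_odd with hp | hp
      · exact hT.exists_shadow_ball_of_near_even hδ hx hp hxp hx'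
      · exact hT.exists_shadow_ball_of_near_odd hδ hp hxp hx'
    · push Not at hnear
      exact hT.exists_shadow_ball_of_far hx hnear hx'
  · exact hT.exists_shadow_Icc_of_odd hδ hm hxm hx'

/-- For `0 < δ < 1/4`, every `δ`-pseudo orbit of `T` is `21 δ`-shadowed by a
true orbit. -/
theorem pseudo_orbit_shadowed (T : ℝ → ℝ) (hT : IsT T) (δ : ℝ)
    (hδ0 : 0 < δ) (hδ : δ < 1 / 4) (x : ℕ → ℝ) (hx : IsPseudoOrbit T δ x) :
    ∃ y : ℝ, 0 ≤ y ∧ ∀ k : ℕ, |T^[k] y - x k| ≤ 21 * δ := by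
  obtain ⟨hx₀, hxT⟩ := hx
  obtain ⟨I, hI, hIT⟩ := exists_seq_of_forall_exists_succ
    (P := fun k I => IsShadowInterval δ (x k) I) (R := fun _ I I' => I' ⊆ T '' I)
    (a := shadowBall δ (x 0)) (Or.inl rfl) fun k _ h =>
      h.exists_subset_image hT hδ (hx₀ k) (hxT k)
  obtain ⟨y, hy₀, hy⟩ := exists_iterate_mem_of_subset_image hT.continuousOn hT.mapsTo
    ((hI 0).subset_Ici hδ) (fun k => (hI k).isCompact) (fun k => (hI k).nonempty hδ0.le (hx₀ k))
    hIT
  exact ⟨y, (hI 0).subset_Ici hδ hy₀,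
    fun k => ((hI k).abs_sub_le (hy k)).trans (by linarith)⟩
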